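/- For a single axially loaded bar: if u(t) satisfies EA·u''(t) + f = 0 on [0, x₁] with u(0) = 0 and EA·u'(x₁) = F (constants EA > 0, f, F real), then u(t) = (F t + f x₁ t - f t^2/2)/(EA), and the stationarity of the virtual-work functional with respect to the endpoint x₁ forces the additional condition (1/2)EA·u'(x₁)^2 + f·u(x₁) = 0. -/

import Mathlib

/-!
The displacement is pinned down by uniqueness for the two-point problem `u'' = -f/EA`,
`u(0) = 0`, `u'(x₁) = F/EA`: the difference of two solutions has constant derivative,
which vanishes at `x₁`, so the difference is constant and vanishes at `0`. For the boundary
condition, the fundamental theorem of calculus gives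
`W'(x₁) = f u(x₁) - (EA/2) u'(x₁)² + F u'(x₁)`, and substituting `F = EA u'(x₁)` turns this
into `(1/2) EA u'(x₁)² + f u(x₁)`.
-/

open Set

section
variable {E : Type*} [NormedAddCommGroup E] [NormedSpace ℝ E]

theorem hasDerivAt_deriv_of_contDiff_two {u : ℝ → E} (hu : ContDiff ℝ 2 u) (t : ℝ) :
    HasDerivAt (deriv u) (iteratedDeriv 2 u t) t := by
  rw [iteratedDeriv_succ, iteratedDeriv_one]
  exact ((hu.iterate_deriv' 1 1).differentiable one_ne_zero t).hasDerivAt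

theorem eqOn_Icc_of_iteratedDeriv_two_eq {u w : ℝ → E} {a b : ℝ}
    (hu : ContDiff ℝ 2 u) (hw : ContDiff ℝ 2 w)
    (h2 : ∀ t ∈ Icc a b, iteratedDeriv 2 u t = iteratedDeriv 2 w t)
    (ha : u a = w a) (hb : deriv u b = deriv w b) :
    ∀ t ∈ Icc a b, u t = w t := by
  have hderiv : ∀ t ∈ Icc a b, deriv u t = deriv w t := by
    intro t ht
    have hconst : ∀ s ∈ Icc a b, (deriv u - deriv w) s = (deriv u - deriv w) a :=
      constant_of_has_deriv_right_zero
        ((hu.continuous_deriv one_le_two).sub (hw.continuous_deriv one_le_two)).continuousOn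
        fun s hs => by
          simpa [h2 s (Ico_subset_Icc_self hs)] using
            ((hasDerivAt_deriv_of_contDiff_two hu s).sub
              (hasDerivAt_deriv_of_contDiff_two hw s)).hasDerivWithinAt
    have hab : a ≤ b := ht.1.trans ht.2
    rw [← sub_eq_zero]
    simpa [hb] using (hconst t ht).trans (hconst b ⟨hab, le_rfl⟩).symm
  exact eq_of_has_deriv_right_eq
    (fun t _ => ((hu.differentiable two_ne_zero) t).hasDerivAt.hasDerivWithinAt)
    (fun t ht => hderiv t (Ico_subset_Icc_self ht) ▸
      ((hw.differentiable two_ne_zero) t).hasDerivAt.hasDerivWithinAt)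
    hu.continuous.continuousOn hw.continuous.continuousOn ha
end

noncomputable def barDisplacement (EA f F x₁ t : ℝ) : ℝ :=
  (F * t + f * x₁ * t - f * t ^ 2 / 2) / EA

theorem hasDerivAt_barDisplacement (EA f F x₁ t : ℝ) :
    HasDerivAt (barDisplacement EA f F x₁) ((F + f * x₁ - f * t) / EA) t := by
  have h := (((hasDerivAt_id' t).const_mul F).add ((hasDerivAt_id' t).const_mul (f * x₁))).sub
    (((hasDerivAt_pow 2 t).const_mul f).div_const 2)
  exact (h.div_const EA).congr_deriv (by norm_num; ring)

theorem deriv_barDisplacement (EA f F x₁ : ℝ) :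
    deriv (barDisplacement EA f F x₁) = fun t => (F + f * x₁ - f * t) / EA :=
  funext fun t => (hasDerivAt_barDisplacement EA f F x₁ t).deriv

theorem iteratedDeriv_two_barDisplacement (EA f F x₁ t : ℝ) :
    iteratedDeriv 2 (barDisplacement EA f F x₁) t = -f / EA := by
  rw [iteratedDeriv_succ, iteratedDeriv_one, deriv_barDisplacement]
  simp

theorem contDiff_barDisplacement (EA f F x₁ : ℝ) : ContDiff ℝ 2 (barDisplacement EA f F x₁) := by
  unfold barDisplacement; fun_prop

theorem bar_movable_endpoint_general
    (EA f F x₁ : ℝ) (hEA : 0 < EA)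
    (u : ℝ → ℝ) (hu : ContDiff ℝ 2 u)
    (hode : ∀ t ∈ Set.Icc 0 x₁, EA * iteratedDeriv 2 u t + f = 0)
    (h0 : u 0 = 0) (hF : EA * deriv u x₁ = F)
    (W : ℝ → ℝ)
    (hWdef : ∀ s, W s = (∫ t in (0:ℝ)..s, (f * u t - EA/2 * (deriv u t)^2)) + F * u s) :
    (∀ t ∈ Set.Icc 0 x₁, u t = (F*t + f*x₁*t - f*t^2/2) / EA) ∧
    (deriv W x₁ = 0 → (1/2) * EA * (deriv u x₁)^2 + f * u x₁ = 0) := by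
  have hEA0 : EA ≠ 0 := hEA.ne'
  have hdispl : ∀ t ∈ Icc 0 x₁, u t = barDisplacement EA f F x₁ t :=
    eqOn_Icc_of_iteratedDeriv_two_eq hu (contDiff_barDisplacement EA f F x₁)
      (fun t ht => by
        rw [iteratedDeriv_two_barDisplacement]
        field_simp
        linarith [hode t ht])
      (by simp [barDisplacement, h0])
      (by
        rw [deriv_barDisplacement]
        field_simp
        linarith)
  have hWderiv : HasDerivAt W (f * u x₁ - EA / 2 * deriv u x₁ ^ 2 + F * deriv u x₁) x₁ := by
    have hintegrand : Continuous fun t => f * u t - EA / 2 * deriv u t ^ 2 := by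
      have := hu.continuous_deriv one_le_two
      fun_prop
    rw [funext hWdef]
    exact (hintegrand.integral_hasStrictDerivAt 0 x₁).hasDerivAt.add
      ((hu.differentiable two_ne_zero x₁).hasDerivAt.const_mul F)
  refine ⟨hdispl, fun hW => ?_⟩
  rw [hWderiv.deriv, ← hF] at hW
  linear_combination hW

/-- An axially loaded bar: if `EA·u'' + f = 0` on `[0, x₁]` with `u(0) = 0` and
`EA·u'(x₁) = F`, then `u(t) = (Ft + f·x₁·t - f·t²/2)/EA` on `[0, x₁]`; moreover
stationarity of the virtual-work functional
`W(s) = ∫₀ˢ (f·u - (EA/2)·u'²) + F·u(s)` with respect to the movable endpoint `x₁`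
forces the virtual work boundary condition `(1/2)EA·u'(x₁)² + f·u(x₁) = 0`. -/
theorem bar_movable_endpoint
    (EA f F x₁ : ℝ) (hEA : 0 < EA) (hx₁ : 0 < x₁)
    (u : ℝ → ℝ) (hu : ContDiff ℝ 2 u)
    (hode : ∀ t ∈ Set.Icc 0 x₁, EA * iteratedDeriv 2 u t + f = 0)
    (h0 : u 0 = 0) (hF : EA * deriv u x₁ = F)
    (W : ℝ → ℝ)
    (hWdef : ∀ s, W s = (∫ t in (0:ℝ)..s, (f * u t - EA/2 * (deriv u t)^2)) + F * u s) :
    (∀ t ∈ Set.Icc 0 x₁, u t = (F*t + f*x₁*t - f*t^2/2) / EA) ∧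
    (deriv W x₁ = 0 → (1/2) * EA * (deriv u x₁)^2 + f * u x₁ = 0) :=
  bar_movable_endpoint_general EA f F x₁ hEA u hu hode h0 hF W hWdef
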